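/- Let Θ be a lub closed set of partial functions from X to V, let θ : X ⇀ V, and suppose θ' ∈ {θ} ⊔ Θ. Then the set {θ'' ∈ Θ : ⊔{θ, θ''} exists and equals θ'} has a maximum, and this maximum equals max (θ']_Θ. -/

import Mathlib

/-! The lub of a set Θ' bounded by `u` is `u` restricted to the points where some member of
Θ' is defined. Hence max (θ']_Θ is the lub of (θ']_Θ, which lies in Θ by lub closedness; it lies
above any θ'' with θ ⊔ θ'' = θ', so replacing θ'' by it does not change the lub with θ. -/

/- Partial functions X ⇀ V are modeled as functions `X → Option V`. -/

variable {X V E : Type*}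

/-- `θ` is less informative than `θ'` (θ ⊑ θ'): wherever `θ` is defined, `θ'` is
defined with the same value. -/
def PFle (θ θ' : X → Option V) : Prop :=
  ∀ x v, θ x = some v → θ' x = some v

/-- The everywhere-undefined partial function ⊥. -/
def pbot : X → Option V := fun _ => none

/-- `θ'` is an upper bound of the set `Θ` of partial functions. -/
def IsUB (Θ : Set (X → Option V)) (θ' : X → Option V) : Prop :=
  ∀ θ ∈ Θ, PFle θ θ'

/-- `θ'` is the least upper bound (⊔Θ) of the set `Θ` of partial functions. -/
def IsLubPF (Θ : Set (X → Option V)) (θ' : X → Option V) : Prop :=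
  IsUB Θ θ' ∧ ∀ θ'', IsUB Θ θ'' → PFle θ' θ''

/-- Θ is lub closed: every subset of Θ admitting an upper bound has its lub in Θ. -/
def LubClosed (Θ : Set (X → Option V)) : Prop :=
  ∀ Θ' ⊆ Θ, ∀ u, IsLubPF Θ' u → u ∈ Θ

/-- (θ']_Θ : the elements of Θ that are less informative than θ'. -/
def below (θ' : X → Option V) (Θ : Set (X → Option V)) : Set (X → Option V) :=
  {θ ∈ Θ | PFle θ θ'}

/-- {θ} ⊔ Θ : the set of all existing lubs θ ⊔ θ'' with θ'' ∈ Θ. -/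
def joinOne (θ : X → Option V) (Θ : Set (X → Option V)) : Set (X → Option V) :=
  {θ' | ∃ θ'' ∈ Θ, IsLubPF {θ, θ''} θ'}

theorem PFle.trans {θ₁ θ₂ θ₃ : X → Option V} (h₁₂ : PFle θ₁ θ₂) (h₂₃ : PFle θ₂ θ₃) :
    PFle θ₁ θ₃ :=
  fun x v h => h₂₃ x v (h₁₂ x v h)

theorem isUB_pair_iff {θ₁ θ₂ u : X → Option V} : IsUB {θ₁, θ₂} u ↔ PFle θ₁ u ∧ PFle θ₂ u := by
  simp [IsUB]

theorem IsLubPF.le {Θ : Set (X → Option V)} {m u : X → Option V} (hm : IsLubPF Θ m)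
    (hu : IsUB Θ u) : PFle m u :=
  hm.2 u hu

theorem exists_isLubPF_of_isUB {Θ : Set (X → Option V)} {u : X → Option V} (hu : IsUB Θ u) :
    ∃ m, IsLubPF Θ m := by
  classical
  refine ⟨fun x => if ∃ p ∈ Θ, p x ≠ none then u x else none, ?ub, ?least⟩
  case ub =>
    intro p hp x v hpx
    simpa [if_pos (⟨p, hp, by simp [hpx]⟩ : ∃ p ∈ Θ, p x ≠ none)] using hu p hp x v hpx
  case least =>
    intro w hw x v hmx
    dsimp only at hmx
    split_ifs at hmx with hdef
    obtain ⟨p, hp, hpx⟩ := hdef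
    obtain ⟨v', hv'⟩ := Option.ne_none_iff_exists'.mp hpx
    obtain rfl : v' = v := Option.some.inj ((hu p hp x v' hv').symm.trans hmx)
    exact hw p hp x v' hv'

theorem LubClosed.exists_max_below {Θ : Set (X → Option V)} (hΘ : LubClosed Θ)
    (θ' : X → Option V) : ∃ m ∈ below θ' Θ, ∀ q ∈ below θ' Θ, PFle q m := by
  have hbound : IsUB (below θ' Θ) θ' := fun _ hq => hq.2
  obtain ⟨m, hm⟩ := exists_isLubPF_of_isUB hbound
  exact ⟨m, ⟨hΘ _ (fun _ hq => hq.1) m hm, hm.le hbound⟩, hm.1⟩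

theorem IsLubPF.pair_of_le {θ θ₀ m θ' : X → Option V} (h : IsLubPF {θ, θ₀} θ')
    (h₀ : PFle θ₀ m) (hm : PFle m θ') : IsLubPF {θ, m} θ' := by
  refine ⟨isUB_pair_iff.mpr ⟨(isUB_pair_iff.mp h.1).1, hm⟩, fun u hu => h.le ?_⟩
  obtain ⟨hθu, hmu⟩ := isUB_pair_iff.mp hu
  exact isUB_pair_iff.mpr ⟨hθu, h₀.trans hmu⟩

/-- For Θ lub closed and θ' ∈ {θ} ⊔ Θ, the set {θ'' ∈ Θ : θ ⊔ θ'' = θ'} has a maximum,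
which is also the maximum of (θ']_Θ. -/
theorem stmt9 (Θ : Set (X → Option V)) (hΘ : LubClosed Θ)
    (θ θ' : X → Option V) (hθ' : θ' ∈ joinOne θ Θ) :
    ∃ m,
      ((m ∈ Θ ∧ IsLubPF {θ, m} θ') ∧
        ∀ θ'', θ'' ∈ Θ → IsLubPF {θ, θ''} θ' → PFle θ'' m) ∧
      (m ∈ below θ' Θ ∧ ∀ q ∈ below θ' Θ, PFle q m) := by
  obtain ⟨θ₀, hθ₀, hlub₀⟩ := hθ'
  obtain ⟨m, hm, hmax⟩ := hΘ.exists_max_below θ'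
  have below_of_lub : ∀ θ'' ∈ Θ, IsLubPF {θ, θ''} θ' → θ'' ∈ below θ' Θ :=
    fun θ'' h h' => ⟨h, (isUB_pair_iff.mp h'.1).2⟩
  refine ⟨m, ⟨⟨hm.1, hlub₀.pair_of_le ?_ hm.2⟩, ?_⟩, hm, hmax⟩
  · exact hmax θ₀ (below_of_lub θ₀ hθ₀ hlub₀)
  · exact fun θ'' h h' => hmax θ'' (below_of_lub θ'' h h')
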